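/- arXiv:2012.07780 — 2 statements merged into one kernel-verified Lean document; each statement's English description precedes it below -/
import Mathlib

section
/- Let μ̄ be a valuation on K̄[X] where K̄ is algebraically closed, and f = c·∏_{i=1}^m (X - λ_i) ∈ K̄[X]. Then the ε-factor ε_{μ̄}(f) := max_{i ≥ 1} (μ̄(f) - μ̄(∂_i f))/i equals δ_{μ̄}(f) := max{μ̄(X - λ) : λ a root of f}. -/
open Polynomial

/-- An additive (Krull) valuation with values in `Γ ∪ {∞}`. -/
structure IsValAdd {R : Type*} [CommRing R] {Γ : Type*} [AddCommGroup Γ] [LinearOrder Γ] [IsOrderedAddMonoid Γ]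
    (v : R → WithTop Γ) : Prop where
  map_mul : ∀ a b, v (a * b) = v a + v b
  map_add : ∀ a b, min (v a) (v b) ≤ v (a + b)
  map_one : v 1 = 0
  map_zero : v 0 = ⊤
  supp : ∀ a, v a = ⊤ → a = 0

/-- The valuation associated to a pair `(a, δ)`:
`ν_{a,δ}(∑ aᵢ (X - a)ⁱ) = min_i (ν aᵢ + i•δ)`. -/
noncomputable def pairVal {K : Type*} [Field K] {Γ : Type*} [AddCommGroup Γ] [LinearOrder Γ] [IsOrderedAddMonoid Γ]
    (ν : K → WithTop Γ) (a : K) (δ : Γ) (f : K[X]) : WithTop Γ :=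
  (Finset.range (f.natDegree + 1)).inf
    fun i => ν ((Polynomial.taylor a f).coeff i) + ((i • δ : Γ) : WithTop Γ)

/-- The coefficients of the `Q`-expansion of a polynomial, by iterated euclidean division. -/
noncomputable def qCoeff {K : Type*} [Field K] (Q : K[X]) : ℕ → K[X] → K[X]
  | 0, f => f %ₘ Q
  | n + 1, f => qCoeff Q n (f /ₘ Q)

/-- The truncation `μ_Q` of `μ` along `Q` : `μ_Q(f) = min_i μ(fᵢ Qⁱ)` over the
`Q`-expansion `f = ∑ fᵢ Qⁱ`. -/
noncomputable def trunc {K : Type*} [Field K] {Γ : Type*} [AddCommGroup Γ] [LinearOrder Γ] [IsOrderedAddMonoid Γ]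
    (μ : K[X] → WithTop Γ) (Q : K[X]) (f : K[X]) : WithTop Γ :=
  (Finset.range (f.natDegree + 1)).inf fun i => μ (qCoeff Q i f * Q ^ i)

/-- `ε_μ(f) < ε_μ(Q)`, stated in cross-multiplied form (valid in the divisible hull). -/
def EpsLt {K : Type*} [Field K] {Γ : Type*} [AddCommGroup Γ] [LinearOrder Γ] [IsOrderedAddMonoid Γ]
    (μ : K[X] → WithTop Γ) (f Q : K[X]) : Prop :=
  ∃ j, 1 ≤ j ∧ μ (hasseDeriv j Q) ≠ ⊤ ∧
    ∀ i, 1 ≤ i → j • μ f + i • μ (hasseDeriv j Q) < i • μ Q + j • μ (hasseDeriv i f)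

/-- `ε_{μ₁}(f) ≤ ε_{μ₂}(g)`, stated in cross-multiplied form. -/
def EpsLE {K L : Type*} [Field K] [Field L] {Γ : Type*} [AddCommGroup Γ] [LinearOrder Γ] [IsOrderedAddMonoid Γ]
    (μ₁ : K[X] → WithTop Γ) (f : K[X]) (μ₂ : L[X] → WithTop Γ) (g : L[X]) : Prop :=
  ∀ i, 1 ≤ i → ∃ j, 1 ≤ j ∧
    j • μ₁ f + i • μ₂ (hasseDeriv j g) ≤ i • μ₂ g + j • μ₁ (hasseDeriv i f)

/-- `Q` is an abstract key polynomial for `μ`. -/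
def IsABKP {K : Type*} [Field K] {Γ : Type*} [AddCommGroup Γ] [LinearOrder Γ] [IsOrderedAddMonoid Γ]
    (μ : K[X] → WithTop Γ) (Q : K[X]) : Prop :=
  Q.Monic ∧ ∀ f : K[X], f ≠ 0 → f.degree < Q.degree → EpsLt μ f Q

/-!
Write `f = c ∏ₖ (X - λₖ)` and `wₖ = μ̄(X - λₖ) ≤ δ`. Since `∂ⱼ(X - λ) = 0` for `j ≥ 2`, the Leibniz
rule gives `∂ᵢ f = c ∑_{#T = i} ∏_{k ∉ T} (X - λₖ)`, and the term indexed by `T` has value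
`μ̄ f - ∑_{k ∈ T} wₖ ≥ μ̄ f - i δ`; hence `μ̄ f ≤ μ̄(∂ᵢ f) + i δ` for all `i`. For `i = t`, the
number of roots with `wₖ = δ`, the term indexed by exactly these roots has value `μ̄ f - t δ`,
while every other `T` with `#T = t` contains a root with `wₖ < δ`, so its term has strictly
larger value. The minimum is then attained once, and `μ̄(∂ₜ f) = μ̄ f - t δ`.
-/

open Finset

namespace Polynomial

lemma hasseDeriv_succ_X_sub_C_mul {R : Type*} [Ring R] (a : R) (p : R[X]) (n : ℕ) :
    hasseDeriv (n + 1) ((X - C a) * p) = (X - C a) * hasseDeriv (n + 1) p + hasseDeriv n p := by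
  have hderiv_one : hasseDeriv 1 (X - C a) = 1 := by simp
  have hderiv_ge_two (j : ℕ) : hasseDeriv (j + 2) (X - C a) = 0 := by
    simp [hasseDeriv_X, hasseDeriv_C]
  rw [hasseDeriv_mul, Nat.sum_antidiagonal_succ, Nat.sum_antidiagonal_eq_sum_range_succ_mk,
    sum_range_succ']
  simp [hderiv_ge_two]

theorem hasseDeriv_prod_X_sub_C {R ι : Type*} [CommRing R] [DecidableEq ι] (s : Finset ι)
    (r : ι → R) (i : ℕ) :
    hasseDeriv i (∏ k ∈ s, (X - C (r k))) =
      ∑ T ∈ s.powersetCard i, ∏ k ∈ s \ T, (X - C (r k)) := by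
  induction s using Finset.induction generalizing i with
  | empty => cases i <;> simp [hasseDeriv_apply_one]
  | insert a s ha ih =>
    cases i with
    | zero => simp
    | succ n =>
      have hnot_mem {T : Finset ι} {j : ℕ} (hT : T ∈ s.powersetCard j) : a ∉ T :=
        fun haT => ha ((mem_powersetCard.1 hT).1 haT)
      rw [prod_insert ha, hasseDeriv_succ_X_sub_C_mul, ih, ih, powersetCard_succ_insert ha,
        sum_union, sum_image, mul_sum]
      · congr 1
        · refine sum_congr rfl fun T hT => ?_
          rw [insert_sdiff_of_notMem _ (hnot_mem hT), prod_insert (by simp [ha])]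
        · refine sum_congr rfl fun T hT => ?_
          rw [insert_sdiff_insert, sdiff_insert_of_notMem ha]
      · intro T hT T' hT' h
        rw [← erase_insert (hnot_mem hT), ← erase_insert (hnot_mem hT'), h]
      · refine disjoint_right.2 fun T hT hT' => ?_
        obtain ⟨T', -, rfl⟩ := mem_image.1 hT
        exact ha ((mem_powersetCard.1 hT').1 (mem_insert_self a T'))

end Polynomial

namespace AddValuation

variable {R ι Γ : Type*} [CommRing R] [AddCommGroup Γ] [LinearOrder Γ] [IsOrderedAddMonoid Γ]
  (v : AddValuation R (WithTop Γ)) {a : ι → R} {w : ι → Γ}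

lemma map_prod_eq_coe_sum (hw : ∀ k, v (a k) = w k) (s : Finset ι) :
    v (∏ k ∈ s, a k) = ↑(∑ k ∈ s, w k) := by
  classical
  induction s using Finset.induction with
  | empty => simp
  | insert b s hb ih => rw [prod_insert hb, sum_insert hb, v.map_mul, ih, hw, WithTop.coe_add]

variable [Fintype ι] [DecidableEq ι] {δ : Γ}

lemma le_map_sum_prod_compl_add (hw : ∀ k, v (a k) = w k) (hδ : ∀ k, w k ≤ δ) (i : ℕ) :
    v (∏ k, a k) ≤ v (∑ T ∈ powersetCard i univ, ∏ k ∈ univ \ T, a k) + ↑(i • δ) := by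
  suffices h : ↑(∑ k, w k - i • δ) ≤ v (∑ T ∈ powersetCard i univ, ∏ k ∈ univ \ T, a k) by
    calc v (∏ k, a k) = ↑(∑ k, w k - i • δ) + ↑(i • δ) := by
          rw [v.map_prod_eq_coe_sum hw, ← WithTop.coe_add, sub_add_cancel]
      _ ≤ _ := by gcongr
  refine v.map_le_sum fun T hT => ?_
  rw [v.map_prod_eq_coe_sum hw, WithTop.coe_le_coe, sub_le_iff_le_add,
    ← sum_sdiff (subset_univ T), ← (mem_powersetCard.1 hT).2]
  gcongr
  exact sum_le_card_nsmul _ _ _ fun k _ => hδ k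

lemma map_prod_eq_map_sum_prod_compl_add (hw : ∀ k, v (a k) = w k) (hδ : ∀ k, w k ≤ δ) :
    v (∏ k, a k) = v (∑ T ∈ powersetCard #{k | w k = δ} univ, ∏ k ∈ univ \ T, a k) +
      ↑(#{k | w k = δ} • δ) := by
  set T₀ : Finset ι := {k | w k = δ}
  have hsum_T₀ : ∑ k ∈ T₀, w k = #T₀ • δ := by
    rw [sum_congr rfl fun k hk => (mem_filter.1 hk).2, sum_const]
  have hP : v (∏ k, a k) = v (∏ k ∈ univ \ T₀, a k) + ↑(#T₀ • δ) := by
    rw [v.map_prod_eq_coe_sum hw, v.map_prod_eq_coe_sum hw, ← WithTop.coe_add, ← hsum_T₀,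
      sum_sdiff (subset_univ T₀)]
  have hlt : ∀ T ∈ (powersetCard #T₀ univ).erase T₀,
      v (∏ k ∈ univ \ T₀, a k) < v (∏ k ∈ univ \ T, a k) := by
    intro T hT
    obtain ⟨hne, hT⟩ := mem_erase.1 hT
    have hcard := (mem_powersetCard.1 hT).2
    obtain ⟨k, hkT, hk⟩ : ∃ k ∈ T, w k < δ := by
      obtain ⟨k, hkT, hkT₀⟩ :=
        not_subset.1 fun hsub => hne (eq_of_subset_of_card_le hsub hcard.ge)
      exact ⟨k, hkT, (hδ k).lt_of_ne (by simpa [T₀] using hkT₀)⟩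
    have hsum_T : ∑ k ∈ T, w k < ∑ k ∈ T₀, w k := by
      rw [hsum_T₀, ← hcard, ← sum_const]
      exact sum_lt_sum (fun k _ => hδ k) ⟨k, hkT, hk⟩
    rw [v.map_prod_eq_coe_sum hw, v.map_prod_eq_coe_sum hw, WithTop.coe_lt_coe,
      ← add_lt_add_iff_right (#T₀ • δ), ← hsum_T₀, sum_sdiff (subset_univ T₀),
      ← sum_sdiff (subset_univ T)]
    gcongr
  have hT₀ : T₀ ∈ powersetCard #T₀ univ := mem_powersetCard.2 ⟨subset_univ T₀, rfl⟩
  rw [hP, ← add_sum_erase _ _ hT₀,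
    v.map_add_eq_of_lt_left (v.map_lt_sum (by simp [v.map_prod_eq_coe_sum hw]) hlt)]

end AddValuation

def IsValAdd.toAddValuation {R Γ : Type*} [CommRing R] [AddCommGroup Γ] [LinearOrder Γ]
    [IsOrderedAddMonoid Γ] {v : R → WithTop Γ} (hv : IsValAdd v) : AddValuation R (WithTop Γ) :=
  AddValuation.of v hv.map_zero hv.map_one hv.map_add hv.map_mul

/-- The hypotheses `hub`, `hach` say that `δ = δ_μ̄(f)`; the conclusion is `ε_μ̄(f) = δ` with
the divisions by `i` cleared. -/
theorem eps_eq_delta_general {L Γ : Type*} [Field L] [AddCommGroup Γ] [LinearOrder Γ] [IsOrderedAddMonoid Γ]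
    (μ : Polynomial L → WithTop Γ) (hμ : IsValAdd μ)
    (m : ℕ) (c : L) (r : Fin m → L)
    (f : Polynomial L) (hf : f = Polynomial.C c * ∏ k, (Polynomial.X - Polynomial.C (r k)))
    (δ : Γ)
    (hub : ∀ k, μ (Polynomial.X - Polynomial.C (r k)) ≤ (δ : WithTop Γ))
    (hach : ∃ k, μ (Polynomial.X - Polynomial.C (r k)) = (δ : WithTop Γ)) :
    (∀ i, 1 ≤ i → μ f ≤ μ (Polynomial.hasseDeriv i f) + ((i • δ : Γ) : WithTop Γ)) ∧
      ∃ i, 1 ≤ i ∧ μ f = μ (Polynomial.hasseDeriv i f) + ((i • δ : Γ) : WithTop Γ) := by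
  classical
  set v := hμ.toAddValuation
  change (∀ i, 1 ≤ i → v f ≤ v (hasseDeriv i f) + _) ∧ ∃ i, 1 ≤ i ∧ v f = v (hasseDeriv i f) + _
  choose w hw using fun k =>
    WithTop.ne_top_iff_exists.1 ((hub k).trans_lt (WithTop.coe_lt_top δ)).ne
  have hw' : ∀ k, v (X - C (r k)) = w k := fun k => (hw k).symm
  have hδ : ∀ k, w k ≤ δ := fun k => WithTop.coe_le_coe.1 (hw k ▸ hub k)
  have hval : v f = v (C c) + v (∏ k, (X - C (r k))) := by rw [hf, v.map_mul]
  have hval_deriv (i : ℕ) : v (hasseDeriv i f) =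
      v (C c) + v (∑ T ∈ powersetCard i univ, ∏ k ∈ univ \ T, (X - C (r k))) := by
    rw [hf, ← smul_eq_C_mul, map_smul, hasseDeriv_prod_X_sub_C, smul_eq_C_mul, v.map_mul]
  obtain ⟨k₀, hk₀⟩ := hach
  refine ⟨fun i _ => ?_, #{k | w k = δ}, card_pos.2 ⟨k₀, by simpa [← hw] using hk₀⟩, ?_⟩
  · rw [hval, hval_deriv, add_assoc]
    exact add_le_add_right (v.le_map_sum_prod_compl_add hw' hδ i) _
  · rw [hval, hval_deriv, add_assoc, v.map_prod_eq_map_sum_prod_compl_add hw' hδ]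

/-- `ε_{μ̄}(f) = δ_{μ̄}(f)`; here `δ` is the maximum of `μ̄(X - λ)` over the
roots `λ` of `f`, and the conclusion states `ε_{μ̄}(f) = δ`, i.e. `δ` is the maximum of
`(μ̄(f) - μ̄(∂ᵢ f))/i` over `i ≥ 1` (in cross-multiplied, division-free form). -/
theorem eps_eq_delta {L Γ : Type*} [Field L] [IsAlgClosed L] [AddCommGroup Γ] [LinearOrder Γ] [IsOrderedAddMonoid Γ]
    (μ : Polynomial L → WithTop Γ) (hμ : IsValAdd μ)
    (m : ℕ) (hm : 1 ≤ m) (c : L) (hc : c ≠ 0) (r : Fin m → L)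
    (f : Polynomial L) (hf : f = Polynomial.C c * ∏ k, (Polynomial.X - Polynomial.C (r k)))
    (δ : Γ)
    (hub : ∀ k, μ (Polynomial.X - Polynomial.C (r k)) ≤ (δ : WithTop Γ))
    (hach : ∃ k, μ (Polynomial.X - Polynomial.C (r k)) = (δ : WithTop Γ)) :
    (∀ i, 1 ≤ i → μ f ≤ μ (Polynomial.hasseDeriv i f) + ((i • δ : Γ) : WithTop Γ)) ∧
      ∃ i, 1 ≤ i ∧ μ f = μ (Polynomial.hasseDeriv i f) + ((i • δ : Γ) : WithTop Γ) :=
  eps_eq_delta_general μ hμ m c r f hf δ hub hach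
end

section
/- Let Q be an abstract key polynomial for μ on K[X]. Then for any f ∈ K[X], ε_{μ_Q}(f) ≤ ε_{μ_Q}(Q) = ε_μ(Q), where ε denotes the epsilon factor and μ_Q is the truncation along Q. -/
open Polynomial

/-!
Fix `j` with `ε_μ(Q) = (μ Q - μ (∂ⱼ Q)) / j`. Every `g` with `deg g < deg Q` has `ε_μ(g) < ε_μ(Q)`
because `Q` is a key polynomial, and by the Leibniz rule `ε_μ(r g) ≤ ε_μ(Q)` for such `r, g`.
This forces `μ_Q (r g) = μ (r g)`: writing `r g = c + Q d`, if `μ (Q d) < μ (r g)` then in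
`∂ⱼ (r g)` the term `∂ⱼQ · d` would be strictly smaller than everything else. Induction on the
`Q`-expansion gives `μ_Q (g h) ≥ μ g + μ_Q h`, and then `μ_Q (∂ᵢ f) ≥ μ_Q f - i ε_μ(Q)` for all `f`,
which is `ε_{μ_Q}(f) ≤ ε_μ(Q)`. Finally `μ_Q` agrees with `μ` on `Q` and on its Hasse derivatives,
so `ε_{μ_Q}(Q) = ε_μ(Q)`.
-/

namespace WithTop

theorem nsmul_top {Γ : Type*} [AddMonoid Γ] {n : ℕ} (hn : n ≠ 0) :
    n • (⊤ : WithTop Γ) = ⊤ := by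
  obtain ⟨m, rfl⟩ := Nat.exists_eq_succ_of_ne_zero hn
  rw [succ_nsmul, WithTop.add_top]

theorem nsmul_ne_top {Γ : Type*} [AddMonoid Γ] {n : ℕ} {x : WithTop Γ} (hx : x ≠ ⊤) :
    n • x ≠ ⊤ := by
  lift x to Γ using hx
  exact WithTop.coe_nsmul x n ▸ WithTop.coe_ne_top

variable {Γ : Type*} [AddCommGroup Γ] [LinearOrder Γ] [IsOrderedAddMonoid Γ]

theorem nsmul_le_nsmul_iff {n : ℕ} (hn : n ≠ 0) {x y : WithTop Γ} :
    n • x ≤ n • y ↔ x ≤ y := by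
  induction y with
  | top => simp [WithTop.nsmul_top hn]
  | coe y =>
    induction x with
    | top => simp [WithTop.nsmul_top hn, ← WithTop.coe_nsmul]
    | coe x =>
      rw [← WithTop.coe_nsmul, ← WithTop.coe_nsmul, WithTop.coe_le_coe, WithTop.coe_le_coe,
        nsmul_le_nsmul_iff_right hn]

theorem nsmul_lt_nsmul_iff {n : ℕ} (hn : n ≠ 0) {x y : WithTop Γ} :
    n • x < n • y ↔ x < y := by
  simp only [← not_le, WithTop.nsmul_le_nsmul_iff hn]

end WithTop

section Slope

variable {Γ : Type*} [AddCommGroup Γ] [LinearOrder Γ]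

/-- `(x - y) / i ≤ (a - e) / j`, cross-multiplied so that it makes sense in `WithTop Γ`:
this is the shape of the comparisons in `EpsLt` and `EpsLE`. -/
def SlopeLE (x y : WithTop Γ) (i : ℕ) (a e : WithTop Γ) (j : ℕ) : Prop :=
  j • x + i • e ≤ i • a + j • y

def SlopeLT (x y : WithTop Γ) (i : ℕ) (a e : WithTop Γ) (j : ℕ) : Prop :=
  j • x + i • e < i • a + j • y

variable {x y x' y' a e : WithTop Γ} {i i' j : ℕ}

theorem SlopeLE.min (h : SlopeLE x y i a e j) (h' : SlopeLE x y' i a e j) :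
    SlopeLE x (min y y') i a e j := by
  rcases min_choice y y' with hmin | hmin <;> rw [hmin] <;> assumption

variable [IsOrderedAddMonoid Γ]

theorem SlopeLE.mono (h : SlopeLE x y i a e j) (hx : x' ≤ x) (hy : y ≤ y') :
    SlopeLE x' y' i a e j := by
  unfold SlopeLE at *
  calc j • x' + i • e ≤ j • x + i • e := by gcongr
    _ ≤ i • a + j • y := h
    _ ≤ i • a + j • y' := by gcongr

theorem slopeLE_top_right (hj : j ≠ 0) : SlopeLE x ⊤ i a e j := by
  simp [SlopeLE, WithTop.nsmul_top hj]

theorem SlopeLE.finset_inf {ι : Type*} {s : Finset ι} {f : ι → WithTop Γ} (hj : j ≠ 0)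
    (h : ∀ k ∈ s, SlopeLE x (f k) i a e j) : SlopeLE x (s.inf f) i a e j :=
  Finset.inf_induction (p := fun z => SlopeLE x z i a e j) (slopeLE_top_right hj)
    (fun _ h₁ _ h₂ => h₁.min h₂) h

theorem SlopeLE.add (h : SlopeLE x y i a e j) (h' : SlopeLE x' y' i' a e j) :
    SlopeLE (x + x') (y + y') (i + i') a e j := by
  unfold SlopeLE at *
  calc j • (x + x') + (i + i') • e = (j • x + i • e) + (j • x' + i' • e) := by
        simp only [smul_add, add_nsmul]; abel
    _ ≤ (i • a + j • y) + (i' • a + j • y') := add_le_add h h'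
    _ = (i + i') • a + j • (y + y') := by simp only [smul_add, add_nsmul]; abel

theorem SlopeLT.add_slopeLE (h : SlopeLT x y i a e j) (h' : SlopeLE x' y' i' a e j)
    (hx' : x' ≠ ⊤) (he : e ≠ ⊤) : SlopeLT (x + x') (y + y') (i + i') a e j := by
  unfold SlopeLT SlopeLE at *
  calc j • (x + x') + (i + i') • e = (j • x + i • e) + (j • x' + i' • e) := by
        simp only [smul_add, add_nsmul]; abel
    _ < (i • a + j • y) + (i' • a + j • y') :=
      WithTop.add_lt_add_of_lt_of_le
        (WithTop.add_ne_top.2 ⟨WithTop.nsmul_ne_top hx', WithTop.nsmul_ne_top he⟩) h h'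
    _ = (i + i') • a + j • (y + y') := by simp only [smul_add, add_nsmul]; abel

theorem slopeLE_self_iff (hj : j ≠ 0) : SlopeLE x y j a e j ↔ x + e ≤ a + y := by
  rw [SlopeLE, ← smul_add, ← smul_add, WithTop.nsmul_le_nsmul_iff hj]

theorem slopeLT_self_iff (hj : j ≠ 0) : SlopeLT x y j a e j ↔ x + e < a + y := by
  rw [SlopeLT, ← smul_add, ← smul_add, WithTop.nsmul_lt_nsmul_iff hj]

theorem SlopeLE.add_lt_of_lt {z : WithTop Γ} (h : SlopeLE x y j a e j) (hz : a + z < x)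
    (ha : a ≠ ⊤) (he : e ≠ ⊤) (hj : j ≠ 0) : e + z < y := by
  rw [slopeLE_self_iff hj] at h
  refine (WithTop.add_lt_add_iff_left ha).1 ?_
  calc a + (e + z) = (a + z) + e := by abel
    _ < x + e := (WithTop.add_lt_add_iff_right he).2 hz
    _ ≤ a + y := h

theorem SlopeLT.add_lt_of_le {z : WithTop Γ} (h : SlopeLT x y j a e j) (hz : a + z ≤ x)
    (ha : a ≠ ⊤) (hj : j ≠ 0) : e + z < y := by
  rw [slopeLT_self_iff hj] at h
  refine (WithTop.add_lt_add_iff_left ha).1 ?_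
  calc a + (e + z) = (a + z) + e := by abel
    _ ≤ x + e := by gcongr
    _ < a + y := h

theorem SlopeLT.trans_slopeLE {e' : WithTop Γ} {j' : ℕ} (h : SlopeLT x y i a e' j')
    (h' : SlopeLE a e' j' a e j) (ha : a ≠ ⊤) (he : e ≠ ⊤) (he' : e' ≠ ⊤) (hj : j ≠ 0)
    (hj' : j' ≠ 0) : SlopeLT x y i a e j := by
  have hx : x ≠ ⊤ := by
    rintro rfl
    rw [SlopeLT, WithTop.nsmul_top hj', WithTop.top_add] at h
    exact not_top_lt h
  induction y with
  | top =>
    rw [SlopeLT, WithTop.nsmul_top hj, WithTop.add_top, lt_top_iff_ne_top]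
    exact WithTop.add_ne_top.2 ⟨WithTop.nsmul_ne_top hx, WithTop.nsmul_ne_top he⟩
  | coe y =>
    lift x to Γ using hx
    lift a to Γ using ha
    lift e to Γ using he
    lift e' to Γ using he'
    simp only [SlopeLT, SlopeLE, ← WithTop.coe_nsmul, ← WithTop.coe_add, WithTop.coe_lt_coe,
      WithTop.coe_le_coe] at h h' ⊢
    rw [← sub_pos] at h ⊢
    rw [← sub_nonneg] at h'
    have key : j' • (i • a + j • y - (j • x + i • e)) =
        j • (i • a + j' • y - (j' • x + i • e')) +
          i • (j' • a + j • e' - (j • a + j' • e)) := by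
      module
    have := add_pos_of_pos_of_nonneg (nsmul_pos h hj) (nsmul_nonneg h' i)
    rwa [← key, nsmul_pos_iff hj'] at this

end Slope

theorem inf_le_apply_sum {M α ι : Type*} [AddCommMonoid M] [LinearOrder α] [OrderTop α]
    {v : M → α} (hadd : ∀ x y, min (v x) (v y) ≤ v (x + y)) (h0 : v 0 = ⊤) (s : Finset ι)
    (F : ι → M) : (s.inf fun k => v (F k)) ≤ v (∑ k ∈ s, F k) := by
  induction s using Finset.cons_induction with
  | empty => simp [h0]
  | cons k s hk ih =>
    rw [Finset.sum_cons, Finset.inf_cons]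
    exact (min_le_min le_rfl ih).trans (hadd _ _)

section EpsBound

variable {R Γ : Type*} [CommSemiring R] [AddCommGroup Γ] [LinearOrder Γ] [IsOrderedAddMonoid Γ]
  {u v w : R[X] → WithTop Γ} {f g : R[X]} {a e : WithTop Γ} {j : ℕ}

/-- `ε_v(f) ≤ (a - e) / j`, cross-multiplied; `i = 0` is allowed and says nothing. -/
def EpsBound (v : R[X] → WithTop Γ) (f : R[X]) (a e : WithTop Γ) (j : ℕ) : Prop :=
  ∀ i, SlopeLE (v f) (v (hasseDeriv i f)) i a e j

theorem EpsBound.zero (h0 : v 0 = ⊤) (hj : j ≠ 0) : EpsBound v 0 a e j := fun i => by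
  rw [map_zero, h0]
  exact slopeLE_top_right hj

theorem EpsBound.add (hadd : ∀ x y, min (v x) (v y) ≤ v (x + y)) (hf : EpsBound v f a e j)
    (hg : EpsBound v g a e j) (hle_f : v (f + g) ≤ v f) (hle_g : v (f + g) ≤ v g) :
    EpsBound v (f + g) a e j := fun i => by
  rw [map_add]
  exact (((hf i).mono hle_f le_rfl).min ((hg i).mono hle_g le_rfl)).mono le_rfl (hadd _ _)

theorem EpsBound.mul (hadd : ∀ x y, min (u x) (u y) ≤ u (x + y)) (h0 : u 0 = ⊤) (hj : j ≠ 0)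
    (hf : EpsBound v f a e j) (hg : EpsBound w g a e j) (hle : u (f * g) ≤ v f + w g)
    (hmul : ∀ s t,
      v (hasseDeriv s f) + w (hasseDeriv t g) ≤ u (hasseDeriv s f * hasseDeriv t g)) :
    EpsBound u (f * g) a e j := fun i => by
  rw [hasseDeriv_mul]
  refine (SlopeLE.finset_inf hj fun p hp => ?_).mono le_rfl (inf_le_apply_sum hadd h0 _ _)
  have h := (hf p.1).add (hg p.2)
  rw [Finset.HasAntidiagonal.mem_antidiagonal.1 hp] at h
  exact h.mono hle (hmul _ _)

end EpsBound

namespace IsValAdd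

variable {R Γ : Type*} [CommRing R] [AddCommGroup Γ] [LinearOrder Γ] [IsOrderedAddMonoid Γ]
  {v : R → WithTop Γ}

theorem ne_top (hv : IsValAdd v) {x : R} (hx : x ≠ 0) : v x ≠ ⊤ :=
  fun h => hx (hv.supp x h)

def toAddValuation_s11 (hv : IsValAdd v) : AddValuation R (WithTop Γ) :=
  AddValuation.of v hv.map_zero hv.map_one hv.map_add hv.map_mul

theorem min_le_valuation_modByMonic {K : Type*} [Field K] {μ : K[X] → WithTop Γ}
    (hμ : IsValAdd μ) (x Q : K[X]) : min (μ x) (μ Q + μ (x /ₘ Q)) ≤ μ (x %ₘ Q) := by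
  rw [← hμ.map_mul, eq_sub_of_add_eq (modByMonic_add_div x Q)]
  exact hμ.toAddValuation_s11.map_sub x (Q * (x /ₘ Q))

end IsValAdd

namespace Polynomial

variable {K : Type*} [Field K] {Q f g : K[X]}

theorem Monic.add_divByMonic (hQ : Q.Monic) (f g : K[X]) :
    (f + g) /ₘ Q = f /ₘ Q + g /ₘ Q := by
  refine (div_modByMonic_unique _ (f %ₘ Q + g %ₘ Q) hQ ⟨?_, ?_⟩).1
  · linear_combination modByMonic_add_div f Q + modByMonic_add_div g Q
  · exact (degree_add_le _ _).trans_lt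
      (max_lt (degree_modByMonic_lt f hQ) (degree_modByMonic_lt g hQ))

theorem Monic.add_mul_divByMonic_modByMonic (hQ : Q.Monic) {c : K[X]}
    (hc : c.degree < Q.degree) (p : K[X]) : (c + Q * p) /ₘ Q = p ∧ (c + Q * p) %ₘ Q = c :=
  div_modByMonic_unique p c hQ ⟨rfl, hc⟩

@[elab_as_elim]
theorem Monic.induction_divByMonic (hQ : Q.Monic) (hdeg : 0 < Q.natDegree) {P : K[X] → Prop}
    (zero : P 0) (step : ∀ f, P (f /ₘ Q) → P f) (f : K[X]) : P f := by
  induction hn : f.natDegree using Nat.strong_induction_on generalizing f with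
  | _ n ih =>
    refine step f ?_
    by_cases hq : f /ₘ Q = 0
    · rwa [hq]
    have : Q.natDegree ≤ f.natDegree :=
      natDegree_le_natDegree (not_lt.1 fun hlt => hq ((divByMonic_eq_zero_iff hQ).2 hlt))
    exact ih _ (by rw [← hn, natDegree_divByMonic f hQ]; omega) _ rfl

theorem natDegree_lt_natDegree_of_degree_lt (hdeg : 0 < Q.natDegree)
    (hf : f.degree < Q.degree) : f.natDegree < Q.natDegree := by
  by_cases hf0 : f = 0
  · simpa [hf0]
  · exact natDegree_lt_natDegree hf0 hf

theorem degree_hasseDeriv_lt (hdeg : 0 < Q.natDegree) (hf : f.degree < Q.degree)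
    (i : ℕ) :
    (hasseDeriv i f).degree < Q.degree :=
  degree_lt_degree ((natDegree_hasseDeriv_le f i).trans_lt
    (by have := natDegree_lt_natDegree_of_degree_lt hdeg hf; omega))

theorem degree_mul_divByMonic_lt (hQ : Q.Monic) (hdeg : 0 < Q.natDegree)
    (hf : f.degree < Q.degree) (hg : g.degree < Q.degree) :
    (f * g /ₘ Q).degree < Q.degree := by
  refine degree_lt_degree ?_
  have := natDegree_lt_natDegree_of_degree_lt hdeg hf
  have := natDegree_lt_natDegree_of_degree_lt hdeg hg
  have := natDegree_mul_le (p := f) (q := g)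
  rw [natDegree_divByMonic _ hQ]
  omega

theorem degree_hasseDeriv_self_lt (hdeg : 0 < Q.natDegree) {i : ℕ} (hi : i ≠ 0) :
    (hasseDeriv i Q).degree < Q.degree :=
  degree_lt_degree ((natDegree_hasseDeriv_le Q i).trans_lt (by omega))

end Polynomial

section Truncation

variable {K Γ : Type*} [Field K] [AddCommGroup Γ] [LinearOrder Γ] [IsOrderedAddMonoid Γ]
  {μ : K[X] → WithTop Γ} {Q : K[X]}

theorem qCoeff_zero_right (i : ℕ) : qCoeff Q i (0 : K[X]) = 0 := by
  induction i with
  | zero => exact zero_modByMonic Q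
  | succ i ih => rwa [qCoeff, zero_divByMonic]

theorem qCoeff_add (hQ : Q.Monic) (i : ℕ) (f g : K[X]) :
    qCoeff Q i (f + g) = qCoeff Q i f + qCoeff Q i g := by
  induction i generalizing f g with
  | zero => exact add_modByMonic f g
  | succ i ih => simp only [qCoeff, hQ.add_divByMonic, ih]

theorem qCoeff_eq_zero_of_natDegree_lt (hQ : Q.Monic) (hdeg : 0 < Q.natDegree) {i : ℕ}
    {f : K[X]} (h : f.natDegree < i) : qCoeff Q i f = 0 := by
  induction i generalizing f with
  | zero => omega
  | succ i ih =>
    rw [qCoeff]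
    by_cases hq : f /ₘ Q = 0
    · rw [hq, qCoeff_zero_right]
    · have : Q.natDegree ≤ f.natDegree :=
        natDegree_le_natDegree (not_lt.1 fun hlt => hq ((divByMonic_eq_zero_iff hQ).2 hlt))
      exact ih (by rw [natDegree_divByMonic f hQ]; omega)

theorem trunc_eq_inf_range (hμ0 : μ 0 = ⊤) (hQ : Q.Monic) (hdeg : 0 < Q.natDegree)
    {f : K[X]} {N : ℕ} (hN : f.natDegree < N) :
    trunc μ Q f = (Finset.range N).inf fun i => μ (qCoeff Q i f * Q ^ i) := by
  refine le_antisymm (Finset.le_inf fun i hi => ?_)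
    (Finset.inf_mono (Finset.range_subset_range.2 (by omega)))
  by_cases hi' : i ≤ f.natDegree
  · exact Finset.inf_le (Finset.mem_range.2 (by omega))
  · rw [qCoeff_eq_zero_of_natDegree_lt hQ hdeg (by omega), zero_mul, hμ0]
    exact le_top

theorem trunc_add_mul (hμ : IsValAdd μ) (hQ : Q.Monic) (hdeg : 0 < Q.natDegree) {c : K[X]}
    (hc : c.degree < Q.degree) (p : K[X]) :
    trunc μ Q (c + Q * p) = min (μ c) (μ Q + trunc μ Q p) := by
  obtain ⟨hdiv, hmod⟩ := hQ.add_mul_divByMonic_modByMonic hc p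
  set N := (c + Q * p).natDegree + p.natDegree + 1
  rw [trunc_eq_inf_range hμ.map_zero hQ hdeg (N := N + 1) (by omega),
    trunc_eq_inf_range hμ.map_zero hQ hdeg (N := N) (by omega), Finset.range_add_one',
    Finset.inf_insert, Finset.inf_map, Finset.apply_inf_eq_inf_comp_of_linearOrder (μ Q + ·)
      (fun _ _ h => add_le_add_right h _) (WithTop.add_top _)]
  congr 1
  · rw [pow_zero, mul_one, qCoeff, hmod]
  · refine Finset.inf_congr rfl fun i _ => ?_
    change μ (qCoeff Q (i + 1) (c + Q * p) * Q ^ (i + 1)) = μ Q + μ (qCoeff Q i p * Q ^ i)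
    rw [qCoeff, hdiv, ← hμ.map_mul, pow_succ]
    ring_nf

theorem trunc_zero (hμ0 : μ 0 = ⊤) : trunc μ Q 0 = ⊤ := by
  simp [trunc, qCoeff, hμ0]

theorem trunc_of_degree_lt (hμ : IsValAdd μ) (hQ : Q.Monic) (hdeg : 0 < Q.natDegree)
    {c : K[X]} (hc : c.degree < Q.degree) : trunc μ Q c = μ c := by
  simpa [trunc_zero hμ.map_zero] using trunc_add_mul hμ hQ hdeg hc 0

theorem trunc_self_mul (hμ : IsValAdd μ) (hQ : Q.Monic) (hdeg : 0 < Q.natDegree) (p : K[X]) :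
    trunc μ Q (Q * p) = μ Q + trunc μ Q p := by
  have h0 : (0 : K[X]).degree < Q.degree := by
    rw [degree_zero]; exact bot_lt_iff_ne_bot.2 (degree_ne_bot.2 hQ.ne_zero)
  simpa [hμ.map_zero] using trunc_add_mul hμ hQ hdeg h0 p

theorem trunc_self (hμ : IsValAdd μ) (hQ : Q.Monic) (hdeg : 0 < Q.natDegree) :
    trunc μ Q Q = μ Q := by
  have h1 : (1 : K[X]).degree < Q.degree := by
    rw [degree_one, degree_eq_natDegree hQ.ne_zero]; exact_mod_cast hdeg
  simpa [trunc_of_degree_lt hμ hQ hdeg h1, hμ.map_one] using trunc_self_mul hμ hQ hdeg 1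

theorem trunc_eq_min (hμ : IsValAdd μ) (hQ : Q.Monic) (hdeg : 0 < Q.natDegree) (f : K[X]) :
    trunc μ Q f = min (μ (f %ₘ Q)) (μ Q + trunc μ Q (f /ₘ Q)) := by
  conv_lhs => rw [← modByMonic_add_div f Q]
  exact trunc_add_mul hμ hQ hdeg (degree_modByMonic_lt f hQ) _

theorem min_trunc_le_trunc_add (hμ : IsValAdd μ) (hQ : Q.Monic) (hdeg : 0 < Q.natDegree)
    (f g : K[X]) : min (trunc μ Q f) (trunc μ Q g) ≤ trunc μ Q (f + g) := by
  have hN : (f + g).natDegree < f.natDegree + g.natDegree + 1 :=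
    (natDegree_add_le f g).trans_lt (by omega)
  rw [trunc_eq_inf_range hμ.map_zero hQ hdeg (N := f.natDegree + g.natDegree + 1) (by omega),
    trunc_eq_inf_range hμ.map_zero hQ hdeg (N := f.natDegree + g.natDegree + 1) (by omega),
    trunc_eq_inf_range hμ.map_zero hQ hdeg hN, ← Finset.inf_inf]
  refine Finset.inf_mono_fun fun i _ => ?_
  rw [qCoeff_add hQ, add_mul]
  exact hμ.map_add _ _

theorem trunc_one (hμ0 : μ 0 = ⊤) (f : K[X]) : trunc μ 1 f = ⊤ := by
  have hq : ∀ i g, qCoeff (1 : K[X]) i g = 0 := fun i => by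
    induction i with
    | zero => exact modByMonic_one
    | succ i ih => exact fun g => ih _
  simp [trunc, hq, hμ0]

end Truncation

section EpsIndex

variable {K Γ : Type*} [Field K] [AddCommGroup Γ] [LinearOrder Γ] [IsOrderedAddMonoid Γ]
  {μ : K[X] → WithTop Γ} {Q : K[X]}

/-- `j` realises `ε_μ(Q) = max_i (μ Q - μ (∂ᵢ Q)) / i`. -/
structure IsEpsIndex (μ : K[X] → WithTop Γ) (Q : K[X]) (j : ℕ) : Prop where
  ne_zero : j ≠ 0
  ne_top : μ (hasseDeriv j Q) ≠ ⊤
  epsBound : EpsBound μ Q (μ Q) (μ (hasseDeriv j Q)) j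

/-- The slopes are compared in the divisible hull of `Γ`, where they become honest elements. -/
theorem exists_isEpsIndex (hμ : IsValAdd μ) (hQ : Q.Monic) (hdeg : 0 < Q.natDegree) :
    ∃ j, IsEpsIndex μ Q j := by
  classical
  have hμQ := hμ.ne_top hQ.ne_zero
  let S := (Finset.Icc 1 Q.natDegree).filter fun j => μ (hasseDeriv j Q) ≠ ⊤
  let slope (j : ℕ) : DivisibleHull Γ :=
    .mk ((μ Q).untopD 0 - (μ (hasseDeriv j Q)).untopD 0) j.toPNat'
  have hnS : Q.natDegree ∈ S := by
    have h1 : hasseDeriv Q.natDegree Q = 1 := by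
      rw [hasseDeriv_natDegree_eq_C, hQ.leadingCoeff, C_1]
    simp [S, h1, hμ.map_one, Nat.one_le_iff_ne_zero.2 hdeg.ne']
  obtain ⟨j, hjS, hmax⟩ := S.exists_max_image slope ⟨_, hnS⟩
  simp only [S, Finset.mem_filter, Finset.mem_Icc] at hjS
  refine ⟨j, by omega, hjS.2, fun t => ?_⟩
  rcases Nat.eq_zero_or_pos t with rfl | ht
  · simp [SlopeLE]
  by_cases htop : μ (hasseDeriv t Q) = ⊤
  · rw [htop]; exact slopeLE_top_right (by omega)
  have htS : t ∈ S := by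
    refine Finset.mem_filter.2 ⟨Finset.mem_Icc.2 ⟨ht, ?_⟩, htop⟩
    by_contra! hlt
    exact htop (by rw [hasseDeriv_eq_zero_of_lt_natDegree _ _ hlt, hμ.map_zero])
  have h := hmax t htS
  have hj0 : 0 < j := hjS.1.1
  simp only [slope, DivisibleHull.mk_le_mk, Nat.toPNat'_coe, ht, hj0, if_true] at h
  revert h
  lift μ Q to Γ using hμQ with A
  lift μ (hasseDeriv t Q) to Γ using htop with Et
  lift μ (hasseDeriv j Q) to Γ using hjS.2 with Ej
  simp only [WithTop.untopD_coe, SlopeLE, ← WithTop.coe_nsmul, ← WithTop.coe_add,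
    WithTop.coe_le_coe, smul_sub, sub_le_sub_iff]
  exact id

end EpsIndex

section KeyPolynomial

variable {K Γ : Type*} [Field K] [AddCommGroup Γ] [LinearOrder Γ] [IsOrderedAddMonoid Γ]
  {μ : K[X] → WithTop Γ} {Q : K[X]} {j : ℕ}
  (hμ : IsValAdd μ) (hQ : IsABKP μ Q) (hdeg : 0 < Q.natDegree) (hj : IsEpsIndex μ Q j)
include hμ hQ hj

theorem slopeLT_of_degree_lt {g : K[X]} (hg0 : g ≠ 0) (hg : g.degree < Q.degree) {s : ℕ}
    (hs : s ≠ 0) :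
    SlopeLT (μ g) (μ (hasseDeriv s g)) s (μ Q) (μ (hasseDeriv j Q)) j := by
  obtain ⟨j', hj', hj'top, hlt⟩ := hQ.2 g hg0 hg
  exact SlopeLT.trans_slopeLE (hlt s (Nat.one_le_iff_ne_zero.2 hs)) (hj.epsBound j')
    (hμ.ne_top hQ.1.ne_zero) hj.ne_top hj'top hj.ne_zero (by omega)

theorem epsBound_of_degree_lt {g : K[X]} (hg : g.degree < Q.degree) :
    EpsBound μ g (μ Q) (μ (hasseDeriv j Q)) j := by
  by_cases hg0 : g = 0
  · exact hg0 ▸ EpsBound.zero hμ.map_zero hj.ne_zero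
  intro s
  rcases eq_or_ne s 0 with rfl | hs
  · simp [SlopeLE, add_comm]
  · exact (slopeLT_of_degree_lt hμ hQ hj hg0 hg hs).le

theorem lt_valuation_hasseDeriv_mul_sub {d : K[X]} (hd0 : d ≠ 0) (hd : d.degree < Q.degree) :
    μ (hasseDeriv j Q) + μ d < μ (hasseDeriv j (Q * d) - hasseDeriv j Q * d) := by
  have hμQ := hμ.ne_top hQ.1.ne_zero
  obtain ⟨n, rfl⟩ := Nat.exists_eq_succ_of_ne_zero hj.ne_zero
  rw [hasseDeriv_mul, Finset.Nat.sum_antidiagonal_succ']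
  dsimp only
  rw [hasseDeriv_zero', add_sub_cancel_left]
  refine hμ.toAddValuation_s11.map_lt_sum (WithTop.add_ne_top.2 ⟨hj.ne_top, hμ.ne_top hd0⟩)
    fun p hp => ?_
  have h := (slopeLT_of_degree_lt hμ hQ hj hd0 hd p.2.succ_ne_zero).add_slopeLE
    (hj.epsBound p.1) hμQ hj.ne_top
  have hpn := Finset.HasAntidiagonal.mem_antidiagonal.1 hp
  rw [show p.2 + 1 + p.1 = n + 1 by omega] at h
  change _ < μ (_ * _)
  rw [hμ.map_mul, add_comm (μ (hasseDeriv p.1 Q))]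
  exact h.add_lt_of_le (add_comm _ _).le hμQ hj.ne_zero

/-- Otherwise `μ (Q d) < μ x` for `x = c + Q d`, so `μ c ≥ μ (Q d)`, and the bounds on `ε_μ`
of `x`, `c`, `d` make `∂ⱼQ · d` strictly smaller than every other term of
`∂ⱼQ · d = ∂ⱼ x - ∂ⱼ c - (∂ⱼ (Q d) - ∂ⱼQ · d)`. -/
theorem valuation_le_add_valuation_divByMonic {x : K[X]}
    (hx : EpsBound μ x (μ Q) (μ (hasseDeriv j Q)) j) (hd : (x /ₘ Q).degree < Q.degree) :
    μ x ≤ μ Q + μ (x /ₘ Q) := by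
  set d := x /ₘ Q
  set c := x %ₘ Q
  set e := μ (hasseDeriv j Q)
  have hμQ := hμ.ne_top hQ.1.ne_zero
  by_contra! hlt
  have hd0 : d ≠ 0 := by
    rintro hd0
    simp [hd0, hμ.map_zero] at hlt
  have hc : μ Q + μ d ≤ μ c := by
    have h := hμ.min_le_valuation_modByMonic x Q
    rwa [min_eq_right hlt.le] at h
  have hx' : e + μ d < μ (hasseDeriv j x) := (hx j).add_lt_of_lt hlt hμQ hj.ne_top hj.ne_zero
  have hc' : e + μ d < μ (hasseDeriv j c) := by
    by_cases hc0 : c = 0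
    · rw [hc0, map_zero, hμ.map_zero, lt_top_iff_ne_top]
      exact WithTop.add_ne_top.2 ⟨hj.ne_top, hμ.ne_top hd0⟩
    exact (slopeLT_of_degree_lt hμ hQ hj hc0 (degree_modByMonic_lt x hQ.1) hj.ne_zero).add_lt_of_le
      hc hμQ hj.ne_zero
  have hsplit : hasseDeriv j Q * d = hasseDeriv j x - hasseDeriv j c -
      (hasseDeriv j (Q * d) - hasseDeriv j Q * d) := by
    rw [← modByMonic_add_div x Q, map_add]
    ring
  have hlead : e + μ d < μ (hasseDeriv j Q * d) := by
    rw [hsplit]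
    exact lt_of_lt_of_le (lt_min (lt_of_lt_of_le (lt_min hx' hc')
      (hμ.toAddValuation_s11.map_sub _ _)) (lt_valuation_hasseDeriv_mul_sub hμ hQ hj hd0 hd))
      (hμ.toAddValuation_s11.map_sub _ _)
  rw [hμ.map_mul] at hlead
  exact lt_irrefl _ hlead

include hdeg

theorem valuation_le_trunc {x : K[X]} (hx : EpsBound μ x (μ Q) (μ (hasseDeriv j Q)) j)
    (hd : (x /ₘ Q).degree < Q.degree) : μ x ≤ trunc μ Q x := by
  have hle := valuation_le_add_valuation_divByMonic hμ hQ hj hx hd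
  rw [trunc_eq_min hμ hQ.1 hdeg, trunc_of_degree_lt hμ hQ.1 hdeg hd]
  exact le_min ((le_min le_rfl hle).trans (hμ.min_le_valuation_modByMonic x Q)) hle

theorem valuation_mul_le_trunc {f g : K[X]} (hf : f.degree < Q.degree) (hg : g.degree < Q.degree) :
    μ (f * g) ≤ trunc μ Q (f * g) :=
  valuation_le_trunc hμ hQ hdeg hj
    (EpsBound.mul hμ.map_add hμ.map_zero hj.ne_zero (epsBound_of_degree_lt hμ hQ hj hf)
      (epsBound_of_degree_lt hμ hQ hj hg) (hμ.map_mul f g).le fun _ _ => (hμ.map_mul _ _).ge)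
    (degree_mul_divByMonic_lt hQ.1 hdeg hf hg)

theorem add_trunc_le_trunc_mul {g : K[X]} (hg : g.degree < Q.degree) (f : K[X]) :
    μ g + trunc μ Q f ≤ trunc μ Q (g * f) := by
  refine hQ.1.induction_divByMonic hdeg ?_ (fun f ih => ?_) f
  · simp [trunc_zero hμ.map_zero]
  conv_rhs => rw [← modByMonic_add_div f Q, mul_add, mul_left_comm]
  refine le_trans ?_ (min_trunc_le_trunc_add hμ hQ.1 hdeg _ _)
  rw [trunc_eq_min hμ hQ.1 hdeg f, ← min_add_add_left, trunc_self_mul hμ hQ.1 hdeg]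
  refine min_le_min ?_ ?_
  · rw [← hμ.map_mul]
    exact valuation_mul_le_trunc hμ hQ hdeg hj hg (degree_modByMonic_lt f hQ.1)
  · calc μ g + (μ Q + trunc μ Q (f /ₘ Q)) = μ Q + (μ g + trunc μ Q (f /ₘ Q)) := by abel
      _ ≤ μ Q + trunc μ Q (g * (f /ₘ Q)) := by gcongr

theorem epsBound_trunc (f : K[X]) : EpsBound (trunc μ Q) f (μ Q) (μ (hasseDeriv j Q)) j := by
  have hadd := min_trunc_le_trunc_add hμ hQ.1 hdeg
  refine hQ.1.induction_divByMonic hdeg (EpsBound.zero (trunc_zero hμ.map_zero) hj.ne_zero)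
    (fun f ih => ?_) f
  have hr := degree_modByMonic_lt f hQ.1
  have hrem : EpsBound (trunc μ Q) (f %ₘ Q) (μ Q) (μ (hasseDeriv j Q)) j := fun i => by
    rw [trunc_of_degree_lt hμ hQ.1 hdeg hr,
      trunc_of_degree_lt hμ hQ.1 hdeg (degree_hasseDeriv_lt hdeg hr i)]
    exact epsBound_of_degree_lt hμ hQ hj hr i
  have hquo : EpsBound (trunc μ Q) (Q * (f /ₘ Q)) (μ Q) (μ (hasseDeriv j Q)) j := by
    refine EpsBound.mul hadd (trunc_zero hμ.map_zero) hj.ne_zero hj.epsBound ih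
      (trunc_self_mul hμ hQ.1 hdeg _).le fun s t => ?_
    rcases eq_or_ne s 0 with rfl | hs
    · rw [hasseDeriv_zero', trunc_self_mul hμ hQ.1 hdeg]
    · exact add_trunc_le_trunc_mul hμ hQ hdeg hj (degree_hasseDeriv_self_lt hdeg hs) _
  have hsum := trunc_add_mul hμ hQ.1 hdeg hr (f /ₘ Q)
  rw [← modByMonic_add_div f Q]
  refine hrem.add hadd hquo ?_ ?_
  · rw [hsum, trunc_of_degree_lt hμ hQ.1 hdeg hr]
    exact min_le_left _ _
  · rw [hsum, trunc_self_mul hμ hQ.1 hdeg]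
    exact min_le_right _ _

end KeyPolynomial

theorem eps_trunc_le_general {K Γ : Type*} [Field K] [AddCommGroup Γ] [LinearOrder Γ] [IsOrderedAddMonoid Γ]
    (μ : Polynomial K → WithTop Γ)
    (hμ : IsValAdd μ)
    (Q : Polynomial K) (hQ : IsABKP μ Q) (f : Polynomial K) :
    EpsLE (trunc μ Q) f (trunc μ Q) Q ∧
      (EpsLE (trunc μ Q) Q μ Q ∧ EpsLE μ Q (trunc μ Q) Q) := by
  rcases Nat.eq_zero_or_pos Q.natDegree with hdeg | hdeg
  · obtain rfl : Q = 1 := hQ.1.natDegree_eq_zero.1 hdeg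
    simp only [EpsLE, trunc_one hμ.map_zero]
    refine ⟨fun i _ => ⟨1, le_rfl, (add_comm _ _).le⟩, fun i hi => ⟨1, le_rfl, ?_⟩,
      fun i hi => ⟨1, le_rfl, ?_⟩⟩ <;> simp [WithTop.nsmul_top (n := i) (by omega)]
  obtain ⟨j, hj⟩ := exists_isEpsIndex hμ hQ.1 hdeg
  have hself : trunc μ Q Q = μ Q := trunc_self hμ hQ.1 hdeg
  have hderiv : ∀ s ≠ 0, trunc μ Q (hasseDeriv s Q) = μ (hasseDeriv s Q) := fun s hs =>
    trunc_of_degree_lt hμ hQ.1 hdeg (degree_hasseDeriv_self_lt hdeg hs)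
  refine ⟨fun i _ => ⟨j, Nat.one_le_iff_ne_zero.2 hj.ne_zero, ?_⟩,
    fun i hi => ⟨i, hi, ?_⟩, fun i hi => ⟨i, hi, ?_⟩⟩
  · rw [hself, hderiv j hj.ne_zero]
    exact epsBound_trunc hμ hQ hdeg hj f i
  all_goals rw [hself, hderiv i (by omega)]

/-- for an abstract key polynomial `Q` and any `f ∈ K[X]`,
`ε_{μ_Q}(f) ≤ ε_{μ_Q}(Q) = ε_μ(Q)` (the comparisons of ε-factors are stated in
cross-multiplied, division-free form via `EpsLE`). -/
theorem eps_trunc_le {K Γ : Type*} [Field K] [AddCommGroup Γ] [LinearOrder Γ] [IsOrderedAddMonoid Γ]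
    (ν : K → WithTop Γ) (μ : Polynomial K → WithTop Γ)
    (hν : IsValAdd ν) (hμ : IsValAdd μ) (hext : ∀ c : K, μ (Polynomial.C c) = ν c)
    (Q : Polynomial K) (hQ : IsABKP μ Q) (f : Polynomial K) :
    EpsLE (trunc μ Q) f (trunc μ Q) Q ∧
      (EpsLE (trunc μ Q) Q μ Q ∧ EpsLE μ Q (trunc μ Q) Q) :=
  eps_trunc_le_general μ hμ Q hQ f
end
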